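/- arXiv:2202.10493 — 3 statements merged into one kernel-verified Lean document; each statement's English description precedes it below -/
import Mathlib

section
/- (Theorem 1.2(ii)(a), non-global existence.) Let h, l : [0,∞) → [0,∞) be continuous, and let f, g : [0,∞) → [0,∞) be locally Lipschitz continuous with f(0) = g(0) = 0. Let u₀ ∈ C_b(ℝ^N) be nonnegative with u₀ ≢ 0. Suppose f ∈ Φ and there exists τ > 0 such that ∫_{‖S(τ)u₀‖_∞}^∞ dσ/f(σ) ≤ ∫_0^τ h(σ) dσ. Then there is no global solution of problem (P) with initial data u₀. -/
open MeasureTheory Real Set Metric Filter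

noncomputable section

/-- `ℝ^N`. -/
abbrev EucN (N : ℕ) := EuclideanSpace ℝ (Fin N)

/-- `C_b(ℝ^N)`, the bounded continuous functions with the sup norm. -/
abbrev CbN (N : ℕ) := BoundedContinuousFunction (EucN N) ℝ

/-- `u` is a global (mild) solution of problem (P)
`u_t - div(ω(x)∇u) = h(t) f(u) + l(t) g(u)`, `u(0) = u₀`, i.e.
`u ∈ C([0,∞), C_b(ℝ^N))`, `u ≥ 0`, and
`u(t) = S(t)u₀ + ∫_0^t S(t-σ)[h(σ) f(u(σ)) + l(σ) g(u(σ))] dσ` for all `t ≥ 0`,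
written pointwise via the kernel `Γ`. -/
def IsGlobalSolution (N : ℕ) (Γ : EucN N → EucN N → ℝ → ℝ)
    (h l f g : ℝ → ℝ) (u₀ : CbN N) (u : ℝ → CbN N) : Prop :=
  ContinuousOn u (Ici (0 : ℝ)) ∧ u 0 = u₀ ∧
    (∀ t : ℝ, 0 ≤ t → ∀ x, 0 ≤ u t x) ∧
    ∀ t : ℝ, 0 < t → ∀ x,
      u t x = (∫ y, Γ x y t * u₀ y) +
        ∫ σ in (0 : ℝ)..t, ∫ y, Γ x y (t - σ) *
          (h σ * f (u σ y) + l σ * g (u σ y))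

/-!
Suppose `u` is a global solution, fix a point `x` and follow `w(σ) = S(τ - σ)u(σ)(x)` on
`[0, τ]`. Applying `S(τ - t)` to the Duhamel formula for `u(t)` and using the Chapman–Kolmogorov
identity gives `w(t) = S(τ)u₀(x) + ∫₀ᵗ S(τ - σ)[h f(u) + l g(u)](σ)(x) dσ`, and the Jensen-type
inequality in `f ∈ Φ` turns this into `w(t) ≥ w(0) + ∫₀ᵗ h(σ) f(w(σ)) dσ`. Comparing with the
separable equation `W' = h f(W)` gives `∫₀^τ h + ∫_{w(τ)}^∞ 1/f ≤ ∫_{w(0)}^∞ 1/f`. As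
`w(τ) = u(τ)(x) ≤ ‖u(τ)‖`, the left side exceeds `∫₀^τ h` by a margin independent of `x`, while
`w(0) = S(τ)u₀(x)` can be taken as close to `‖S(τ)u₀‖` as we like; this contradicts the blow-up
condition.
-/

open Topology BoundedContinuousFunction

theorem BoundedContinuousFunction.abs_apply_le_norm {X : Type*} [TopologicalSpace X]
    (φ : X →ᵇ ℝ) (y : X) : |φ y| ≤ ‖φ‖ :=
  (Real.norm_eq_abs _).symm.trans_le (φ.norm_coe_le_norm y)

theorem continuousOn_Ici_of_forall_lipschitzOnWith_Icc {f : ℝ → ℝ}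
    (hf : ∀ M > (0 : ℝ), ∃ K : NNReal, LipschitzOnWith K f (Icc 0 M)) :
    ContinuousOn f (Ici 0) := by
  intro s hs
  obtain ⟨K, hK⟩ := hf (s + 1) (by linarith [mem_Ici.1 hs])
  refine (hK.continuousOn s ⟨hs, by linarith⟩).mono_of_mem_nhdsWithin ?_
  rw [← Ici_inter_Iic]
  exact inter_mem_nhdsWithin _ (Iic_mem_nhds (by linarith))

section Osgood

variable {f : ℝ → ℝ}

theorem setIntegral_Ioi_one_div_pos (hfpos : ∀ s > (0 : ℝ), 0 < f s) {z : ℝ} (hz : 0 < z)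
    (hint : IntegrableOn (fun σ => 1 / f σ) (Ioi z)) : 0 < ∫ σ in Ioi z, 1 / f σ := by
  have hpos : ∀ σ ∈ Ioi z, 0 < 1 / f σ := fun σ hσ => one_div_pos.2 (hfpos σ (hz.trans hσ))
  rw [setIntegral_pos_iff_support_of_nonneg_ae
    ((ae_restrict_iff' measurableSet_Ioi).2 (Eventually.of_forall fun σ hσ => (hpos σ hσ).le)) hint,
    (inter_eq_right.2 fun σ hσ => (hpos σ hσ).ne' : Function.support _ ∩ Ioi z = Ioi z)]
  simp

theorem setIntegral_Ioi_one_div_le_add (hfmono : MonotoneOn f (Ioi 0))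
    (hfpos : ∀ s > (0 : ℝ), 0 < f s) {z a : ℝ} (hz : 0 < z) (hza : z ≤ a)
    (hint : IntegrableOn (fun σ => 1 / f σ) (Ioi z)) :
    ∫ σ in Ioi z, 1 / f σ ≤ (∫ σ in Ioi a, 1 / f σ) + (a - z) / f z := by
  have hbound : ∀ σ ∈ uIoc z a, ‖1 / f σ‖ ≤ 1 / f z := by
    intro σ hσ
    rw [uIoc_of_le hza] at hσ
    have hσpos : 0 < σ := hz.trans hσ.1
    rw [Real.norm_of_nonneg (one_div_pos.2 (hfpos σ hσpos)).le]
    exact one_div_le_one_div_of_le (hfpos z hz) (hfmono hz hσpos hσ.1.le)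
  have := (le_abs_self _).trans (intervalIntegral.norm_integral_le_of_norm_le_const hbound)
  rw [← intervalIntegral.integral_Ioi_sub_Ioi hint hza, abs_of_nonneg (sub_nonneg.2 hza)] at this
  rw [div_eq_mul_one_div]
  linarith

theorem setIntegral_Ioi_one_div_le_of_le (hfnn : ∀ s, 0 ≤ s → 0 ≤ f s) {z M : ℝ} (hz : 0 ≤ z)
    (hzM : z ≤ M) (hint : IntegrableOn (fun σ => 1 / f σ) (Ioi z)) :
    ∫ σ in Ioi M, 1 / f σ ≤ ∫ σ in Ioi z, 1 / f σ := by
  rw [← sub_nonneg, intervalIntegral.integral_Ioi_sub_Ioi hint hzM]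
  exact intervalIntegral.integral_nonneg hzM fun σ hσ => one_div_nonneg.2 (hfnn σ (hz.trans hσ.1))

theorem exists_setIntegral_Ioi_apply_lt {X : Type*} [TopologicalSpace X]
    (hfmono : MonotoneOn f (Ioi 0)) (hfpos : ∀ s > (0 : ℝ), 0 < f s)
    (hfint : ∀ z > (0 : ℝ), IntegrableOn (fun σ => 1 / f σ) (Ioi z)) {φ : X →ᵇ ℝ}
    (hφ : ∀ x, 0 ≤ φ x) (hφ0 : 0 < ‖φ‖) {δ : ℝ} (hδ : 0 < δ) :
    ∃ x, 0 < φ x ∧ ∫ σ in Ioi (φ x), 1 / f σ < (∫ σ in Ioi ‖φ‖, 1 / f σ) + δ := by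
  set a := ‖φ‖
  have hfa : 0 < f (a / 2) := hfpos _ (half_pos hφ0)
  set ε := min (a / 2) (δ * f (a / 2))
  have hε : 0 < ε := lt_min (half_pos hφ0) (mul_pos hδ hfa)
  obtain ⟨x, hx⟩ : ∃ x, a - ε < φ x := by
    by_contra! hle
    have : a ≤ a - ε := (norm_le (by linarith [min_le_left (a / 2) (δ * f (a / 2))])).2
      fun x => by rw [Real.norm_of_nonneg (hφ x)]; exact hle x
    linarith
  have hxa : φ x ≤ a := (le_abs_self _).trans (φ.abs_apply_le_norm x)
  have hx2 : a / 2 ≤ φ x := by linarith [min_le_left (a / 2) (δ * f (a / 2))]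
  have hx0 : 0 < φ x := (half_pos hφ0).trans_le hx2
  refine ⟨x, hx0, (setIntegral_Ioi_one_div_le_add hfmono hfpos hx0 hxa (hfint _ hx0)).trans_lt ?_⟩
  have hfx : f (a / 2) ≤ f (φ x) := hfmono (half_pos hφ0) hx0 hx2
  rw [add_lt_add_iff_left, div_lt_iff₀ (hfpos _ hx0)]
  calc a - φ x < ε := by linarith
    _ ≤ δ * f (a / 2) := min_le_right _ _
    _ ≤ δ * f (φ x) := mul_le_mul_of_nonneg_left hfx hδ.le

theorem intervalIntegral_le_of_le_add_integral (hf : ContinuousOn f (Ici 0))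
    (hfnn : ∀ s, 0 ≤ s → 0 ≤ f s) (hfmono : MonotoneOn f (Ioi 0))
    (hfpos : ∀ s > (0 : ℝ), 0 < f s) {h w : ℝ → ℝ} {a τ : ℝ} (ha : 0 < a) (hτ : 0 ≤ τ)
    (hh : ContinuousOn h (Icc 0 τ)) (hhnn : ∀ t ∈ Icc 0 τ, 0 ≤ h t)
    (hw : ContinuousOn w (Icc 0 τ)) (hwnn : ∀ t ∈ Icc 0 τ, 0 ≤ w t)
    (hle : ∀ t ∈ Icc 0 τ, a + ∫ σ in 0..t, h σ * f (w σ) ≤ w t) :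
    ∫ t in 0..τ, h t ≤ ∫ σ in a..(a + ∫ σ in 0..τ, h σ * f (w σ)), 1 / f σ := by
  -- `W = a + ∫₀ᵗ h f(w) ≤ w` has `W' = h f(w) ≥ h f(W)`, so `h ≤ W' / f(W)`; substitute `σ = W(t)`.
  set q : ℝ → ℝ := fun σ => h σ * f (w σ)
  set W : ℝ → ℝ := fun t => a + ∫ σ in 0..t, q σ
  have hIcc : uIcc 0 τ = Icc 0 τ := uIcc_of_le hτ
  have hq : ContinuousOn q (Icc 0 τ) := hh.mul (hf.comp hw hwnn)
  have hq_int : IntervalIntegrable q volume 0 τ := (hIcc ▸ hq).intervalIntegrable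
  have hW : ContinuousOn W (Icc 0 τ) :=
    continuousOn_const.add (hIcc ▸ intervalIntegral.continuousOn_primitive_interval'
      hq_int left_mem_uIcc)
  have hq_nn : ∀ t ∈ Icc 0 τ, 0 ≤ q t := fun t ht => mul_nonneg (hhnn t ht) (hfnn _ (hwnn t ht))
  have hW_ge : ∀ t ∈ Icc 0 τ, a ≤ W t := fun t ht =>
    le_add_of_nonneg_right <| intervalIntegral.integral_nonneg ht.1 fun σ hσ =>
      hq_nn σ ⟨hσ.1, hσ.2.trans ht.2⟩
  have hW_pos : ∀ t ∈ Icc 0 τ, 0 < f (W t) := fun t ht => hfpos _ (ha.trans_le (hW_ge t ht))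
  have hW_deriv : ∀ t ∈ Ioo 0 τ, HasDerivAt W (q t) t := fun t ht =>
    (intervalIntegral.integral_hasDerivAt_right
      (hq_int.mono_set (by rw [hIcc, uIcc_of_le ht.1.le]; exact Icc_subset_Icc_right ht.2.le))
      ((hq.mono Ioo_subset_Icc_self).stronglyMeasurableAtFilter isOpen_Ioo t ht)
      (hq.continuousAt (Icc_mem_nhds ht.1 ht.2))).const_add a
  have hchange : ∫ t in 0..τ, (fun σ => 1 / f σ) (W t) * q t
      = ∫ σ in W 0..W τ, 1 / f σ :=
    intervalIntegral.integral_comp_mul_deriv_of_deriv_nonneg (g := fun σ => 1 / f σ) (hIcc ▸ hW)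
      (by simpa [hτ] using hW_deriv)
      (by simpa [hτ] using fun t ht => hq_nn t (Ioo_subset_Icc_self ht))
  simp only [W, intervalIntegral.integral_same, add_zero] at hchange
  rw [← hchange]
  refine intervalIntegral.integral_mono_on hτ (hIcc ▸ hh).intervalIntegrable ?_ fun t ht => ?_
  · refine ContinuousOn.intervalIntegrable (hIcc ▸ ?_)
    exact ((continuousOn_const.div (hf.comp hW fun t ht => (hW_ge t ht).trans' ha.le))
      fun t ht => (hW_pos t ht).ne').mul hq
  · have hfW : f (W t) ≤ f (w t) :=
      hfmono (ha.trans_le (hW_ge t ht)) (ha.trans_le ((hW_ge t ht).trans (hle t ht)))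
        (hle t ht)
    rw [one_div_mul_eq_div, le_div_iff₀ (hW_pos t ht)]
    exact mul_le_mul_of_nonneg_left hfW (hhnn t ht)

theorem integral_add_setIntegral_Ioi_le (hf : ContinuousOn f (Ici 0))
    (hfnn : ∀ s, 0 ≤ s → 0 ≤ f s) (hfmono : MonotoneOn f (Ioi 0))
    (hfpos : ∀ s > (0 : ℝ), 0 < f s)
    (hfint : ∀ z > (0 : ℝ), IntegrableOn (fun σ => 1 / f σ) (Ioi z))
    {h w : ℝ → ℝ} {a τ : ℝ} (ha : 0 < a) (hτ : 0 ≤ τ)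
    (hh : ContinuousOn h (Icc 0 τ)) (hhnn : ∀ t ∈ Icc 0 τ, 0 ≤ h t)
    (hw : ContinuousOn w (Icc 0 τ)) (hwnn : ∀ t ∈ Icc 0 τ, 0 ≤ w t)
    (hle : ∀ t ∈ Icc 0 τ, a + ∫ σ in 0..t, h σ * f (w σ) ≤ w t) {M : ℝ} (hwM : w τ ≤ M) :
    (∫ t in 0..τ, h t) + ∫ σ in Ioi M, 1 / f σ ≤ ∫ σ in Ioi a, 1 / f σ := by
  set b := a + ∫ σ in 0..τ, h σ * f (w σ)
  have hτ_mem : τ ∈ Icc 0 τ := right_mem_Icc.2 hτ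
  have hab : a ≤ b := le_add_of_nonneg_right <| intervalIntegral.integral_nonneg hτ
    fun σ hσ => mul_nonneg (hhnn σ hσ) (hfnn _ (hwnn σ hσ))
  have hbM : b ≤ M := (hle τ hτ_mem).trans hwM
  have hosgood := intervalIntegral_le_of_le_add_integral hf hfnn hfmono hfpos ha hτ hh hhnn hw
    hwnn hle
  have htail : ∫ σ in Ioi M, 1 / f σ ≤ ∫ σ in Ioi b, 1 / f σ :=
    setIntegral_Ioi_one_div_le_of_le hfnn (ha.le.trans hab) hbM (hfint b (ha.trans_le hab))
  linarith [intervalIntegral.integral_Ioi_sub_Ioi (hfint a ha) hab]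

end Osgood

section TransitionDensity

variable {X : Type*} [MeasurableSpace X] {μ : Measure X} {Γ : X → X → ℝ → ℝ}

def kernelOp (Γ : X → X → ℝ → ℝ) (μ : Measure X) (t : ℝ) (φ : X → ℝ) (x : X) : ℝ :=
  ∫ y, Γ x y t * φ y ∂μ

structure IsTransitionDensity (Γ : X → X → ℝ → ℝ) (μ : Measure X) : Prop where
  measurable : Measurable fun p : X × X × ℝ => Γ p.1 p.2.1 p.2.2
  nonneg : ∀ x y t, 0 < t → 0 ≤ Γ x y t
  integral_eq_one : ∀ x t, 0 < t → ∫ y, Γ x y t ∂μ = 1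
  chapman_kolmogorov : ∀ x y a b, 0 < a → 0 < b → Γ x y (a + b) = ∫ ξ, Γ x ξ a * Γ ξ y b ∂μ

namespace IsTransitionDensity

theorem measurable_apply (hΓ : IsTransitionDensity Γ μ) (x : X) (t : ℝ) :
    Measurable fun y => Γ x y t :=
  hΓ.measurable.comp (measurable_const.prodMk (measurable_id.prodMk measurable_const))

theorem integrable (hΓ : IsTransitionDensity Γ μ) (x : X) {t : ℝ} (ht : 0 < t) :
    Integrable (fun y => Γ x y t) μ :=
  Integrable.of_integral_ne_zero (by rw [hΓ.integral_eq_one x t ht]; exact one_ne_zero)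

theorem integrable_mul (hΓ : IsTransitionDensity Γ μ) (x : X) {t : ℝ} (ht : 0 < t)
    {φ : X → ℝ} (hφ : AEStronglyMeasurable φ μ) {C : ℝ} (hφC : ∀ y, |φ y| ≤ C) :
    Integrable (fun y => Γ x y t * φ y) μ :=
  (hΓ.integrable x ht).mul_bdd hφ (Eventually.of_forall hφC)

theorem abs_kernelOp_le (hΓ : IsTransitionDensity Γ μ) (x : X) {t : ℝ} (ht : 0 < t)
    {φ : X → ℝ} (hφ : AEStronglyMeasurable φ μ) {C : ℝ} (hφC : ∀ y, |φ y| ≤ C) :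
    |kernelOp Γ μ t φ x| ≤ C :=
  calc |kernelOp Γ μ t φ x| ≤ ∫ y, Γ x y t * |φ y| ∂μ := by
        refine (abs_integral_le_integral_abs).trans_eq (integral_congr_ae ?_)
        filter_upwards with y
        rw [abs_mul, abs_of_nonneg (hΓ.nonneg x y t ht)]
    _ ≤ ∫ y, Γ x y t * C ∂μ :=
        integral_mono (hΓ.integrable_mul x ht hφ.norm fun y => by simpa using hφC y)
          ((hΓ.integrable x ht).mul_const C)
          fun y => mul_le_mul_of_nonneg_left (hφC y) (hΓ.nonneg x y t ht)
    _ = C := by rw [integral_mul_const, hΓ.integral_eq_one x t ht, one_mul]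

theorem kernelOp_nonneg (hΓ : IsTransitionDensity Γ μ) (x : X) {t : ℝ} (ht : 0 < t)
    {φ : X → ℝ} (hφ : ∀ y, 0 ≤ φ y) : 0 ≤ kernelOp Γ μ t φ x :=
  integral_nonneg fun y => mul_nonneg (hΓ.nonneg x y t ht) (hφ y)

theorem kernelOp_add (hΓ : IsTransitionDensity Γ μ) (x : X) {t : ℝ} (ht : 0 < t)
    {φ ψ : X → ℝ} (hφ : AEStronglyMeasurable φ μ) (hψ : AEStronglyMeasurable ψ μ) {C D : ℝ}
    (hφC : ∀ y, |φ y| ≤ C) (hψD : ∀ y, |ψ y| ≤ D) :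
    kernelOp Γ μ t (fun y => φ y + ψ y) x = kernelOp Γ μ t φ x + kernelOp Γ μ t ψ x := by
  simp only [kernelOp, mul_add]
  exact integral_add (hΓ.integrable_mul x ht hφ hφC) (hΓ.integrable_mul x ht hψ hψD)

theorem kernelOp_kernelOp [SFinite μ] (hΓ : IsTransitionDensity Γ μ) (x : X) {a b : ℝ}
    (ha : 0 < a) (hb : 0 < b) {φ : X → ℝ} (hφ : Measurable φ) {C : ℝ} (hφC : ∀ y, |φ y| ≤ C) :
    kernelOp Γ μ a (kernelOp Γ μ b φ) x = kernelOp Γ μ (a + b) φ x := by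
  set F : X × X → ℝ := fun p => Γ x p.1 a * (Γ p.1 p.2 b * φ p.2)
  have hF : Measurable F := (hΓ.measurable_apply x a).comp measurable_fst |>.mul <|
    (hΓ.measurable.comp (measurable_fst.prodMk (measurable_snd.prodMk measurable_const))).mul
      (hφ.comp measurable_snd)
  have hF_int : Integrable F (μ.prod μ) := by
    refine (integrable_prod_iff hF.aestronglyMeasurable).2 ⟨Eventually.of_forall fun ξ =>
      (hΓ.integrable_mul ξ hb hφ.aestronglyMeasurable hφC).const_mul (Γ x ξ a), ?_⟩
    refine ((hΓ.integrable x ha).mul_const C).mono'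
      hF.norm.stronglyMeasurable.integral_prod_right'.aestronglyMeasurable
      (Eventually.of_forall fun ξ => ?_)
    have hslice : ∫ y, ‖F (ξ, y)‖ ∂μ = Γ x ξ a * kernelOp Γ μ b (fun y => |φ y|) ξ := by
      rw [kernelOp, ← integral_const_mul]
      congr 1 with y
      simp only [F, norm_mul, Real.norm_eq_abs, abs_of_nonneg (hΓ.nonneg _ _ _ ha),
        abs_of_nonneg (hΓ.nonneg _ _ _ hb)]
    rw [Real.norm_of_nonneg (integral_nonneg fun _ => norm_nonneg _), hslice]
    refine mul_le_mul_of_nonneg_left ((le_abs_self _).trans ?_) (hΓ.nonneg x ξ a ha)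
    exact hΓ.abs_kernelOp_le ξ hb hφ.abs.aestronglyMeasurable fun y => by simpa using hφC y
  calc kernelOp Γ μ a (kernelOp Γ μ b φ) x = ∫ ξ, ∫ y, F (ξ, y) ∂μ ∂μ := by
        simp only [kernelOp, F, integral_const_mul]
    _ = ∫ y, ∫ ξ, F (ξ, y) ∂μ ∂μ := integral_integral_swap hF_int
    _ = kernelOp Γ μ (a + b) φ x := by
        simp only [kernelOp, F, hΓ.chapman_kolmogorov x _ a b ha hb, ← integral_mul_const,
          mul_assoc]

theorem kernelOp_integral_comm [SFinite μ] {T : Type*} [MeasurableSpace T] {ν : Measure T}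
    [IsFiniteMeasure ν] (hΓ : IsTransitionDensity Γ μ) (x : X) {s : ℝ} (hs : 0 < s)
    {P : T → X → ℝ} (hP : Measurable (Function.uncurry P)) {B : ℝ}
    (hPB : ∀ᵐ σ ∂ν, ∀ ξ, |P σ ξ| ≤ B) :
    kernelOp Γ μ s (fun ξ => ∫ σ, P σ ξ ∂ν) x = ∫ σ, kernelOp Γ μ s (P σ) x ∂ν := by
  have hint : Integrable (fun p : X × T => Γ x p.1 s * P p.2 p.1) (μ.prod ν) := by
    refine ((hΓ.integrable x hs).mul_prod (integrable_const B)).mono'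
      (((hΓ.measurable_apply x s).comp measurable_fst).mul
        (hP.comp measurable_swap)).aestronglyMeasurable ?_
    filter_upwards [Measure.quasiMeasurePreserving_snd.ae hPB] with p hp
    rw [norm_mul, Real.norm_of_nonneg (hΓ.nonneg x p.1 s hs)]
    exact mul_le_mul_of_nonneg_left (hp p.1) (hΓ.nonneg x p.1 s hs)
  simp only [kernelOp, ← integral_const_mul]
  exact integral_integral_swap hint

theorem measurable_kernelOp_uncurry [SFinite μ] (hΓ : IsTransitionDensity Γ μ) {T : Type*}
    [MeasurableSpace T] {θ : T → ℝ} (hθ : Measurable θ) {F : T → X → ℝ}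
    (hF : Measurable (Function.uncurry F)) :
    Measurable fun p : T × X => kernelOp Γ μ (θ p.1) (F p.1) p.2 := by
  have hmeas : Measurable fun q : (T × X) × X => Γ q.1.2 q.2 (θ q.1.1) * F q.1.1 q.2 :=
    (hΓ.measurable.comp ((measurable_snd.comp measurable_fst).prodMk
      (measurable_snd.prodMk (hθ.comp (measurable_fst.comp measurable_fst))))).mul
      (hF.comp ((measurable_fst.comp measurable_fst).prodMk measurable_snd))
  exact hmeas.stronglyMeasurable.integral_prod_right'.measurable

theorem measurable_kernelOp [SFinite μ] (hΓ : IsTransitionDensity Γ μ) (t : ℝ) {φ : X → ℝ}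
    (hφ : Measurable φ) : Measurable (kernelOp Γ μ t φ) :=
  (hΓ.measurable_kernelOp_uncurry (T := Unit) (F := fun _ => φ) measurable_const
    (hφ.comp measurable_snd)).comp (measurable_const (a := ()) |>.prodMk measurable_id)

theorem kernelOp_setIntegral_kernelOp [SFinite μ] (hΓ : IsTransitionDensity Γ μ) (x : X)
    {s t : ℝ} (hs : 0 < s) {F : ℝ → X → ℝ} (hF : Measurable (Function.uncurry F)) {B : ℝ}
    (hFB : ∀ σ ∈ Ioo 0 t, ∀ y, |F σ y| ≤ B) :
    kernelOp Γ μ s (fun ξ => ∫ σ in Ioo 0 t, kernelOp Γ μ (t - σ) (F σ) ξ) x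
      = ∫ σ in Ioo 0 t, kernelOp Γ μ (s + t - σ) (F σ) x := by
  have hFσ : ∀ σ, Measurable (F σ) := fun σ => hF.comp measurable_prodMk_left
  have hPB : ∀ᵐ σ ∂volume.restrict (Ioo 0 t), ∀ ξ, |kernelOp Γ μ (t - σ) (F σ) ξ| ≤ B :=
    (ae_restrict_iff' measurableSet_Ioo).2 <| Eventually.of_forall fun σ hσ ξ =>
      hΓ.abs_kernelOp_le ξ (sub_pos.2 hσ.2) (hFσ σ).aestronglyMeasurable
        (hFB σ hσ)
  rw [hΓ.kernelOp_integral_comm x hs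
    (hΓ.measurable_kernelOp_uncurry (measurable_const.sub measurable_id) hF) hPB]
  refine setIntegral_congr_fun measurableSet_Ioo fun σ hσ => ?_
  rw [hΓ.kernelOp_kernelOp x hs (sub_pos.2 hσ.2) (hFσ σ) (hFB σ hσ),
    add_sub_assoc]

end IsTransitionDensity

end TransitionDensity

section BoundedContinuous

variable {X : Type*} [TopologicalSpace X] [MeasurableSpace X] {μ : Measure X}
  {Γ : X → X → ℝ → ℝ}

namespace IsTransitionDensity

theorem kernelOp_pos [OpensMeasurableSpace X] [μ.IsOpenPosMeasure]
    (hΓ : IsTransitionDensity Γ μ) {x : X} {t : ℝ} (ht : 0 < t) (hpos : ∀ y, 0 < Γ x y t)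
    {φ : X →ᵇ ℝ} (hφ : ∀ y, 0 ≤ φ y) (hφ0 : φ ≠ 0) :
    0 < kernelOp Γ μ t φ x := by
  obtain ⟨y₀, hy₀⟩ : ∃ y₀, φ y₀ ≠ 0 := by
    by_contra! hzero
    exact hφ0 (BoundedContinuousFunction.ext hzero)
  rw [kernelOp, integral_pos_iff_support_of_nonneg (fun y => mul_nonneg (hpos y).le (hφ y))
    (hΓ.integrable_mul x ht φ.continuous.aestronglyMeasurable φ.abs_apply_le_norm)]
  refine (φ.continuous.isOpen_support.measure_pos μ ⟨y₀, hy₀⟩).trans_le (measure_mono ?_)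
  exact fun y hy => mul_ne_zero (hpos y).ne' hy

end IsTransitionDensity

structure IsKernelSemigroup (Γ : X → X → ℝ → ℝ) (μ : Measure X)
    (S : ℝ → (X →ᵇ ℝ) → X →ᵇ ℝ) : Prop where
  zero_apply : ∀ φ, S 0 φ = φ
  apply_eq_kernelOp : ∀ φ t, 0 < t → ∀ x, S t φ x = kernelOp Γ μ t φ x

namespace IsKernelSemigroup

variable {S : ℝ → (X →ᵇ ℝ) → X →ᵇ ℝ}

theorem lipschitzWith_one [OpensMeasurableSpace X] (hS : IsKernelSemigroup Γ μ S)
    (hΓ : IsTransitionDensity Γ μ) {t : ℝ} (ht : 0 ≤ t) : LipschitzWith 1 (S t) := by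
  rcases ht.eq_or_lt with rfl | ht
  · rw [show S 0 = id from funext hS.zero_apply]
    exact LipschitzWith.id
  refine LipschitzWith.of_dist_le_mul fun φ ψ => ?_
  rw [NNReal.coe_one, one_mul, BoundedContinuousFunction.dist_le dist_nonneg]
  intro x
  have hsub := hΓ.kernelOp_add x ht (φ - ψ).continuous.aestronglyMeasurable
    ψ.continuous.aestronglyMeasurable (φ - ψ).abs_apply_le_norm ψ.abs_apply_le_norm
  simp only [BoundedContinuousFunction.coe_sub, Pi.sub_apply, sub_add_cancel] at hsub
  rw [Real.dist_eq, hS.apply_eq_kernelOp φ t ht, hS.apply_eq_kernelOp ψ t ht, hsub,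
    add_sub_cancel_right, dist_eq_norm]
  exact hΓ.abs_kernelOp_le x ht (φ - ψ).continuous.aestronglyMeasurable
    (φ - ψ).abs_apply_le_norm

theorem apply_nonneg (hS : IsKernelSemigroup Γ μ S) (hΓ : IsTransitionDensity Γ μ) {t : ℝ}
    (ht : 0 ≤ t) {φ : X →ᵇ ℝ} (hφ : ∀ y, 0 ≤ φ y) (x : X) : 0 ≤ S t φ x := by
  rcases ht.eq_or_lt with rfl | ht
  · rw [hS.zero_apply]
    exact hφ x
  · rw [hS.apply_eq_kernelOp φ t ht]
    exact hΓ.kernelOp_nonneg x ht hφ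

theorem norm_apply_pos [OpensMeasurableSpace X] [μ.IsOpenPosMeasure] [Nonempty X]
    (hS : IsKernelSemigroup Γ μ S) (hΓ : IsTransitionDensity Γ μ) {t : ℝ} (ht : 0 < t)
    (hpos : ∀ x y, 0 < Γ x y t) {φ : X →ᵇ ℝ} (hφ : ∀ y, 0 ≤ φ y) (hφ0 : φ ≠ 0) :
    0 < ‖S t φ‖ := by
  obtain ⟨x⟩ := ‹Nonempty X›
  have hx : 0 < S t φ x := by
    rw [hS.apply_eq_kernelOp φ t ht]
    exact hΓ.kernelOp_pos ht (hpos x) hφ hφ0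
  exact hx.trans_le ((le_abs_self _).trans ((S t φ).abs_apply_le_norm x))

end IsKernelSemigroup

theorem ContinuousOn.apply_sub_of_lipschitzWith {E : Type*} [PseudoMetricSpace E]
    {S : ℝ → E → E} {K : NNReal} (hS : ∀ t ≥ 0, LipschitzWith K (S t))
    (hcont : ∀ φ, ContinuousOn (fun t => S t φ) (Ici 0)) {u : ℝ → E} {τ : ℝ}
    (hu : ContinuousOn u (Icc 0 τ)) : ContinuousOn (fun σ => S (τ - σ) (u σ)) (Icc 0 τ) := by
  have hjoint : ContinuousOn (fun p : E × ℝ => S p.2 p.1) (univ ×ˢ Ici 0) :=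
    continuousOn_prod_of_continuousOn_lipschitzOnWith _ K (fun φ _ => hcont φ)
      fun t ht => (hS t ht).lipschitzOnWith
  exact hjoint.comp (hu.prodMk (continuous_const.sub continuous_id).continuousOn)
    fun σ hσ => ⟨mem_univ _, sub_nonneg.2 hσ.2⟩

end BoundedContinuous

section Forcing

variable {X : Type*} [TopologicalSpace X] {h l f g : ℝ → ℝ} {u : ℝ → X →ᵇ ℝ}

/-- The right-hand side `h(σ) f(u(σ)) + l(σ) g(u(σ))` of (P), with time clamped at `0` so that it
is jointly continuous on all of `ℝ × X`. -/
def forcing (h l f g : ℝ → ℝ) (u : ℝ → X →ᵇ ℝ) (σ : ℝ) (y : X) : ℝ :=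
  h (max σ 0) * f (u (max σ 0) y) + l (max σ 0) * g (u (max σ 0) y)

theorem forcing_of_nonneg {σ : ℝ} (hσ : 0 ≤ σ) (y : X) :
    forcing h l f g u σ y = h σ * f (u σ y) + l σ * g (u σ y) := by
  simp only [forcing, max_eq_left hσ]

theorem continuous_forcing (hh : ContinuousOn h (Ici 0)) (hl : ContinuousOn l (Ici 0))
    (hf : ContinuousOn f (Ici 0)) (hg : ContinuousOn g (Ici 0)) (hu : ContinuousOn u (Ici 0))
    (hunn : ∀ t, 0 ≤ t → ∀ y, 0 ≤ u t y) :
    Continuous (Function.uncurry (forcing h l f g u)) := by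
  have hclamp : Continuous fun σ : ℝ => max σ 0 := continuous_id.max continuous_const
  have hmem : ∀ σ : ℝ, max σ 0 ∈ Ici 0 := fun σ => le_max_right σ 0
  have hū : Continuous fun p : ℝ × X => u (max p.1 0) p.2 :=
    continuous_eval.comp (((hu.comp_continuous hclamp hmem).comp continuous_fst).prodMk
      continuous_snd)
  have hmem' : ∀ p : ℝ × X, u (max p.1 0) p.2 ∈ Ici 0 := fun p => hunn _ (hmem p.1) p.2
  exact (((hh.comp_continuous hclamp hmem).comp continuous_fst).mul
    (hf.comp_continuous hū hmem')).add
    (((hl.comp_continuous hclamp hmem).comp continuous_fst).mul (hg.comp_continuous hū hmem'))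

theorem exists_abs_forcing_le (hh : ContinuousOn h (Ici 0)) (hl : ContinuousOn l (Ici 0))
    (hf : ContinuousOn f (Ici 0)) (hg : ContinuousOn g (Ici 0)) (hu : ContinuousOn u (Ici 0))
    (hunn : ∀ t, 0 ≤ t → ∀ y, 0 ≤ u t y) (τ : ℝ) :
    ∃ B, ∀ σ ∈ Icc 0 τ, ∀ y, |forcing h l f g u σ y| ≤ B := by
  obtain ⟨M, hM⟩ := isCompact_Icc.exists_bound_of_continuousOn (hu.mono Icc_subset_Ici_self)
  have hK : Icc 0 τ ×ˢ Icc 0 M ⊆ Ici 0 ×ˢ Ici 0 :=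
    prod_mono Icc_subset_Ici_self Icc_subset_Ici_self
  have hΦ : ContinuousOn (fun p : ℝ × ℝ => h p.1 * f p.2 + l p.1 * g p.2)
      (Icc 0 τ ×ˢ Icc 0 M) :=
    (((hh.comp continuousOn_fst fun _ hp => hp.1).mul (hf.comp continuousOn_snd
      fun _ hp => hp.2)).add ((hl.comp continuousOn_fst fun _ hp => hp.1).mul
      (hg.comp continuousOn_snd fun _ hp => hp.2))).mono hK
  obtain ⟨B, hB⟩ := (isCompact_Icc.prod isCompact_Icc).exists_bound_of_continuousOn hΦ
  refine ⟨B, fun σ hσ y => ?_⟩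
  rw [forcing_of_nonneg hσ.1, ← Real.norm_eq_abs]
  exact hB (σ, u σ y) ⟨hσ, hunn σ hσ.1 y, ((u σ).abs_apply_le_norm y).trans' (le_abs_self _)
    |>.trans (hM σ hσ)⟩

end Forcing

namespace IsGlobalSolution

variable {N : ℕ} {Γ : EucN N → EucN N → ℝ → ℝ} {h l f g : ℝ → ℝ} {u₀ : CbN N}
  {u : ℝ → CbN N}

theorem eq_kernelOp_add (hu : IsGlobalSolution N Γ h l f g u₀ u) {t : ℝ} (ht : 0 < t)
    (ξ : EucN N) :
    u t ξ = kernelOp Γ volume t u₀ ξ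
      + ∫ σ in Ioo 0 t, kernelOp Γ volume (t - σ) (forcing h l f g u σ) ξ := by
  rw [hu.2.2.2 t ht ξ, intervalIntegral.integral_of_le ht.le, integral_Ioc_eq_integral_Ioo]
  congr 1
  refine setIntegral_congr_fun measurableSet_Ioo fun σ hσ => ?_
  simp only [kernelOp, forcing_of_nonneg hσ.1.le]

theorem kernelOp_eq (hu : IsGlobalSolution N Γ h l f g u₀ u)
    (hΓ : IsTransitionDensity Γ volume) (hF : Measurable (Function.uncurry (forcing h l f g u)))
    {s t B : ℝ} (hs : 0 < s) (ht : 0 < t) (hFB : ∀ σ ∈ Ioo 0 t, ∀ y, |forcing h l f g u σ y| ≤ B)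
    (x : EucN N) :
    kernelOp Γ volume s (u t) x = kernelOp Γ volume (s + t) u₀ x
      + ∫ σ in Ioo 0 t, kernelOp Γ volume (s + t - σ) (forcing h l f g u σ) x := by
  set A := kernelOp Γ volume t u₀
  set D := fun ξ => ∫ σ in Ioo 0 t, kernelOp Γ volume (t - σ) (forcing h l f g u σ) ξ
  have hA : Measurable A := hΓ.measurable_kernelOp t u₀.continuous.measurable
  have hA_le : ∀ ξ, |A ξ| ≤ ‖u₀‖ := fun ξ =>
    hΓ.abs_kernelOp_le ξ ht u₀.continuous.aestronglyMeasurable u₀.abs_apply_le_norm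
  have hD : D = fun ξ => u t ξ - A ξ := funext fun ξ => by rw [hu.eq_kernelOp_add ht ξ]; ring
  have hD_le : ∀ ξ, |D ξ| ≤ ‖u t‖ + ‖u₀‖ := fun ξ => by
    rw [hD]
    exact (abs_sub _ _).trans (add_le_add ((u t).abs_apply_le_norm ξ) (hA_le ξ))
  have hut : ⇑(u t) = fun ξ => A ξ + D ξ := funext (hu.eq_kernelOp_add ht)
  rw [hut, hΓ.kernelOp_add x hs hA.aestronglyMeasurable
    (hD ▸ (u t).continuous.measurable.sub hA : Measurable D).aestronglyMeasurable hA_le hD_le,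
    hΓ.kernelOp_kernelOp x hs ht u₀.continuous.measurable u₀.abs_apply_le_norm,
    hΓ.kernelOp_setIntegral_kernelOp x hs hF hFB]

theorem mul_apply_le_kernelOp_forcing (hu : IsGlobalSolution N Γ h l f g u₀ u)
    (hΓ : IsTransitionDensity Γ volume) {S : ℝ → CbN N → CbN N}
    (hfJensen : ∀ v₀ : CbN N, (∀ x, 0 ≤ v₀ x) → ∀ t > (0 : ℝ), ∀ x,
      f (S t v₀ x) ≤ kernelOp Γ volume t (fun y => f (v₀ y)) x)
    (hhnn : ∀ t, 0 ≤ t → 0 ≤ h t) (hlnn : ∀ t, 0 ≤ t → 0 ≤ l t)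
    (hfnn : ∀ s, 0 ≤ s → 0 ≤ f s) (hgnn : ∀ s, 0 ≤ s → 0 ≤ g s) {σ τ B : ℝ} (hσ : 0 ≤ σ)
    (hστ : σ < τ) (hF : Measurable (forcing h l f g u σ))
    (hFB : ∀ y, |forcing h l f g u σ y| ≤ B) (x : EucN N) :
    h σ * f (S (τ - σ) (u σ) x) ≤ kernelOp Γ volume (τ - σ) (forcing h l f g u σ) x := by
  have hτσ : 0 < τ - σ := sub_pos.2 hστ
  have hunn := hu.2.2.1 σ hσ
  calc h σ * f (S (τ - σ) (u σ) x)
      ≤ h σ * kernelOp Γ volume (τ - σ) (fun y => f (u σ y)) x :=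
        mul_le_mul_of_nonneg_left (hfJensen _ hunn _ hτσ x) (hhnn σ hσ)
    _ = kernelOp Γ volume (τ - σ) (fun y => h σ * f (u σ y)) x := by
        simp only [kernelOp, ← integral_const_mul, mul_left_comm]
    _ ≤ kernelOp Γ volume (τ - σ) (forcing h l f g u σ) x := by
        refine integral_mono_of_nonneg (Eventually.of_forall fun y => ?_)
          (hΓ.integrable_mul x hτσ hF.aestronglyMeasurable hFB) (Eventually.of_forall fun y => ?_)
        · exact mul_nonneg (hΓ.nonneg x y _ hτσ) (mul_nonneg (hhnn σ hσ) (hfnn _ (hunn y)))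
        · refine mul_le_mul_of_nonneg_left ?_ (hΓ.nonneg x y _ hτσ)
          rw [forcing_of_nonneg hσ]
          exact le_add_of_nonneg_right (mul_nonneg (hlnn σ hσ) (hgnn _ (hunn y)))

theorem add_integral_le (hu : IsGlobalSolution N Γ h l f g u₀ u)
    (hΓ : IsTransitionDensity Γ volume) {S : ℝ → CbN N → CbN N} (hS : IsKernelSemigroup Γ volume S)
    (hfJensen : ∀ v₀ : CbN N, (∀ x, 0 ≤ v₀ x) → ∀ t > (0 : ℝ), ∀ x,
      f (S t v₀ x) ≤ kernelOp Γ volume t (fun y => f (v₀ y)) x)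
    (hhnn : ∀ t, 0 ≤ t → 0 ≤ h t) (hlnn : ∀ t, 0 ≤ t → 0 ≤ l t)
    (hfnn : ∀ s, 0 ≤ s → 0 ≤ f s) (hgnn : ∀ s, 0 ≤ s → 0 ≤ g s)
    (hF : Measurable (Function.uncurry (forcing h l f g u))) {τ B : ℝ} (hτ : 0 < τ)
    (hFB : ∀ σ ∈ Icc 0 τ, ∀ y, |forcing h l f g u σ y| ≤ B) (x : EucN N) {t : ℝ}
    (ht : t ∈ Icc 0 τ) :
    S τ u₀ x + ∫ σ in 0..t, h σ * f (S (τ - σ) (u σ) x) ≤ S (τ - t) (u t) x := by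
  rcases ht.1.eq_or_lt with rfl | ht0
  · simp [hu.2.1]
  have hFσ : ∀ σ, Measurable (forcing h l f g u σ) := fun σ => hF.comp measurable_prodMk_left
  have hFB' : ∀ σ ∈ Ioo 0 t, ∀ y, |forcing h l f g u σ y| ≤ B := fun σ hσ =>
    hFB σ ⟨hσ.1.le, hσ.2.le.trans ht.2⟩
  have hrepr : S (τ - t) (u t) x = kernelOp Γ volume τ u₀ x
      + ∫ σ in Ioo 0 t, kernelOp Γ volume (τ - σ) (forcing h l f g u σ) x := by
    rcases ht.2.eq_or_lt with rfl | htτ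
    · rw [sub_self, hS.zero_apply]
      exact hu.eq_kernelOp_add ht0 x
    · rw [hS.apply_eq_kernelOp _ _ (sub_pos.2 htτ),
        hu.kernelOp_eq hΓ hF (sub_pos.2 htτ) ht0 hFB', sub_add_cancel]
  have hD_int : IntegrableOn (fun σ => kernelOp Γ volume (τ - σ) (forcing h l f g u σ) x)
      (Ioo 0 t) := by
    refine IntegrableOn.of_bound measure_Ioo_lt_top ((hΓ.measurable_kernelOp_uncurry
      (measurable_const.sub measurable_id) hF).comp (measurable_id.prodMk measurable_const)
      |>.aestronglyMeasurable) B ((ae_restrict_iff' measurableSet_Ioo).2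
      (Eventually.of_forall fun σ hσ => ?_))
    exact hΓ.abs_kernelOp_le x (by linarith [hσ.2, ht.2]) (hFσ σ).aestronglyMeasurable
      (hFB' σ hσ)
  rw [hrepr, hS.apply_eq_kernelOp u₀ τ hτ, intervalIntegral.integral_of_le ht0.le,
    integral_Ioc_eq_integral_Ioo]
  refine add_le_add_right (integral_mono_of_nonneg ?_ hD_int ?_) _
  · refine (ae_restrict_iff' measurableSet_Ioo).2 (Eventually.of_forall fun σ hσ => ?_)
    exact mul_nonneg (hhnn σ hσ.1.le) (hfnn _ (hS.apply_nonneg hΓ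
      (by linarith [hσ.2, ht.2]) (hu.2.2.1 σ hσ.1.le) x))
  · refine (ae_restrict_iff' measurableSet_Ioo).2 (Eventually.of_forall fun σ hσ => ?_)
    exact hu.mul_apply_le_kernelOp_forcing hΓ hfJensen hhnn hlnn hfnn hgnn hσ.1.le
      (hσ.2.trans_le ht.2) (hFσ σ) (hFB' σ hσ) x

end IsGlobalSolution

theorem nonglobal_existence_f_general
    (N : ℕ) (α : ℝ)
    (Γ : EucN N → EucN N → ℝ → ℝ)
    (hΓmeas : Measurable fun p : EucN N × EucN N × ℝ => Γ p.1 p.2.1 p.2.2)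
    (c₀ : ℝ)
    (hK1y : ∀ (x : EucN N) (t : ℝ), 0 < t → ∫ y, Γ x y t = 1)
    (hK2 : ∀ (x y : EucN N) (s t : ℝ), 0 < s → s < t →
      Γ x y t = ∫ ξ, Γ x ξ (t - s) * Γ ξ y s)
    (hK5 : ∀ (x y : EucN N) (t : ℝ), 0 < t →
      0 < Γ x y t ∧ Γ x y t ≤ c₀ * t ^ (-(N : ℝ) / (2 - α)))
    (S : ℝ → CbN N → CbN N)
    (hS0 : ∀ φ, S 0 φ = φ)
    (hSΓ : ∀ (φ : CbN N) (t : ℝ), 0 < t → ∀ x, S t φ x = ∫ y, Γ x y t * φ y)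
    (hK4 : ∀ φ : CbN N, ContinuousOn (fun t => S t φ) (Ici (0 : ℝ)))
    (h l : ℝ → ℝ)
    (hhcont : ContinuousOn h (Ici 0)) (hlcont : ContinuousOn l (Ici 0))
    (hhnn : ∀ t, 0 ≤ t → 0 ≤ h t) (hlnn : ∀ t, 0 ≤ t → 0 ≤ l t)
    (f g : ℝ → ℝ)
    (hfLip : ∀ M > (0 : ℝ), ∃ K : NNReal, LipschitzOnWith K f (Icc 0 M))
    (hgLip : ∀ M > (0 : ℝ), ∃ K : NNReal, LipschitzOnWith K g (Icc 0 M))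
    (hfnn : ∀ s, 0 ≤ s → 0 ≤ f s) (hgnn : ∀ s, 0 ≤ s → 0 ≤ g s)
    (u₀ : CbN N) (hu₀nn : ∀ x, 0 ≤ u₀ x) (hu₀ne : u₀ ≠ 0)
    -- `f ∈ Φ`:
    (hfOsgood : ∀ z > (0 : ℝ), IntegrableOn (fun σ => 1 / f σ) (Ioi z))
    (hfJensen : ∀ v₀ : CbN N, (∀ x, 0 ≤ v₀ x) → ∀ t > (0 : ℝ), ∀ x,
      f (S t v₀ x) ≤ ∫ y, Γ x y t * f (v₀ y))
    (hfmono : MonotoneOn f (Ici 0)) (hfpos : ∀ s > (0 : ℝ), 0 < f s)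
    -- the blow-up condition:
    (τ : ℝ) (hτ : 0 < τ)
    (hcond : (∫ σ in Ioi ‖S τ u₀‖, 1 / f σ) ≤ ∫ σ in (0 : ℝ)..τ, h σ) :
    ¬ ∃ u : ℝ → CbN N, IsGlobalSolution N Γ h l f g u₀ u := by
  rintro ⟨u, hu⟩
  obtain ⟨hu_cont, -, hu_nonneg, -⟩ := id hu
  have hΓ : IsTransitionDensity Γ volume :=
    ⟨hΓmeas, fun x y t ht => (hK5 x y t ht).1.le, hK1y, fun x y a b ha hb => by
      simpa using hK2 x y b (a + b) hb (by linarith)⟩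
  have hS : IsKernelSemigroup Γ volume S := ⟨hS0, hSΓ⟩
  have hf := continuousOn_Ici_of_forall_lipschitzOnWith_Icc hfLip
  have hg := continuousOn_Ici_of_forall_lipschitzOnWith_Icc hgLip
  have hfmono' := hfmono.mono Ioi_subset_Ici_self
  have hF := (continuous_forcing hhcont hlcont hf hg hu_cont hu_nonneg).measurable
  obtain ⟨B, hFB⟩ := exists_abs_forcing_le hhcont hlcont hf hg hu_cont hu_nonneg τ
  have ha : 0 < ‖S τ u₀‖ :=
    hS.norm_apply_pos hΓ hτ (fun x y => (hK5 x y τ hτ).1) hu₀nn hu₀ne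
  set M := max ‖u τ‖ ‖S τ u₀‖
  have hM : 0 < M := ha.trans_le (le_max_right _ _)
  obtain ⟨x, hx, hxa⟩ := exists_setIntegral_Ioi_apply_lt hfmono' hfpos hfOsgood
    (hS.apply_nonneg hΓ hτ.le hu₀nn) ha (setIntegral_Ioi_one_div_pos hfpos hM (hfOsgood M hM))
  set w := fun σ => S (τ - σ) (u σ) x
  have hw : ContinuousOn w (Icc 0 τ) :=
    (continuous_eval_const x).comp_continuousOn
      (ContinuousOn.apply_sub_of_lipschitzWith (fun t ht => hS.lipschitzWith_one hΓ ht) hK4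
        (hu_cont.mono Icc_subset_Ici_self))
  have hwnn : ∀ σ ∈ Icc 0 τ, 0 ≤ w σ := fun σ hσ =>
    hS.apply_nonneg hΓ (sub_nonneg.2 hσ.2) (hu_nonneg σ hσ.1) x
  have hwτ : w τ ≤ M := by
    simp only [w, sub_self, hS0]
    exact (le_abs_self _).trans (((u τ).abs_apply_le_norm x).trans (le_max_left _ _))
  have hosgood := integral_add_setIntegral_Ioi_le hf hfnn hfmono' hfpos hfOsgood hx hτ.le
    (hhcont.mono Icc_subset_Ici_self) (fun t ht => hhnn t ht.1) hw hwnn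
    (fun t ht => hu.add_integral_le hΓ hS hfJensen hhnn hlnn hfnn hgnn hF hτ hFB x ht) hwτ
  linarith

/-- Theorem 1.2(ii)(a): if `f ∈ Φ` and the Osgood-type integral condition
holds at some time `τ > 0`, there is no global solution with data `u₀`. -/
theorem nonglobal_existence_f
    (N : ℕ) (hN : 1 ≤ N) (α : ℝ) (hα0 : 0 ≤ α) (hα1 : α < 1)
    (Γ : EucN N → EucN N → ℝ → ℝ)
    (hΓmeas : Measurable fun p : EucN N × EucN N × ℝ => Γ p.1 p.2.1 p.2.2)
    (c₀ : ℝ) (hc₀ : 0 < c₀)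
    (hK1y : ∀ (x : EucN N) (t : ℝ), 0 < t → ∫ y, Γ x y t = 1)
    (hK1x : ∀ (y : EucN N) (t : ℝ), 0 < t → ∫ x, Γ x y t = 1)
    (hK2 : ∀ (x y : EucN N) (s t : ℝ), 0 < s → s < t →
      Γ x y t = ∫ ξ, Γ x ξ (t - s) * Γ ξ y s)
    (hK5 : ∀ (x y : EucN N) (t : ℝ), 0 < t →
      0 < Γ x y t ∧ Γ x y t ≤ c₀ * t ^ (-(N : ℝ) / (2 - α)))
    (S : ℝ → CbN N → CbN N)
    (hS0 : ∀ φ, S 0 φ = φ)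
    (hSΓ : ∀ (φ : CbN N) (t : ℝ), 0 < t → ∀ x, S t φ x = ∫ y, Γ x y t * φ y)
    (hK4 : ∀ φ : CbN N, ContinuousOn (fun t => S t φ) (Ici (0 : ℝ)))
    (h l : ℝ → ℝ)
    (hhcont : ContinuousOn h (Ici 0)) (hlcont : ContinuousOn l (Ici 0))
    (hhnn : ∀ t, 0 ≤ t → 0 ≤ h t) (hlnn : ∀ t, 0 ≤ t → 0 ≤ l t)
    (f g : ℝ → ℝ)
    (hfLip : ∀ M > (0 : ℝ), ∃ K : NNReal, LipschitzOnWith K f (Icc 0 M))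
    (hgLip : ∀ M > (0 : ℝ), ∃ K : NNReal, LipschitzOnWith K g (Icc 0 M))
    (hfnn : ∀ s, 0 ≤ s → 0 ≤ f s) (hgnn : ∀ s, 0 ≤ s → 0 ≤ g s)
    (hf0 : f 0 = 0) (hg0 : g 0 = 0)
    (u₀ : CbN N) (hu₀nn : ∀ x, 0 ≤ u₀ x) (hu₀ne : u₀ ≠ 0)
    -- `f ∈ Φ`:
    (hfOsgood : ∀ z > (0 : ℝ), IntegrableOn (fun σ => 1 / f σ) (Ioi z))
    (hfJensen : ∀ v₀ : CbN N, (∀ x, 0 ≤ v₀ x) → ∀ t > (0 : ℝ), ∀ x,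
      f (S t v₀ x) ≤ ∫ y, Γ x y t * f (v₀ y))
    (hfmono : MonotoneOn f (Ici 0)) (hfpos : ∀ s > (0 : ℝ), 0 < f s)
    -- the blow-up condition:
    (τ : ℝ) (hτ : 0 < τ)
    (hcond : (∫ σ in Ioi ‖S τ u₀‖, 1 / f σ) ≤ ∫ σ in (0 : ℝ)..τ, h σ) :
    ¬ ∃ u : ℝ → CbN N, IsGlobalSolution N Γ h l f g u₀ u :=
  nonglobal_existence_f_general N α Γ hΓmeas c₀ hK1y hK2 hK5 S hS0 hSΓ hK4 h l hhcont hlcont hhnn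
    hlnn f g hfLip hgLip hfnn hgnn u₀ hu₀nn hu₀ne hfOsgood hfJensen hfmono hfpos τ hτ hcond
end
end

section
/- (Proposition 2.5(i).) Let u₀ ∈ C_b(ℝ^N) ∩ L¹(ℝ^N) be nonnegative with u₀ ≢ 0. Then ‖S(t)u₀‖_∞ ∼ t^{−N/(2−α)} for t sufficiently large; that is, there exist constants c, C > 0 and t₀ > 0 such that c t^{−N/(2−α)} ≤ ‖S(t)u₀‖_∞ ≤ C t^{−N/(2−α)} for all t ≥ t₀. -/
open MeasureTheory Real Set Metric Filter

noncomputable section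

/-- Proposition 2.5(i): for nonnegative nontrivial `u₀ ∈ C_b ∩ L¹`,
`‖S(t)u₀‖_∞ ∼ t^{-N/(2-α)}` for `t` large. -/
theorem semigroup_decay_L1
    (N : ℕ) (hN : 1 ≤ N) (α : ℝ) (hα0 : 0 ≤ α) (hα1 : α < 1)
    (Γ : EucN N → EucN N → ℝ → ℝ)
    (hΓmeas : Measurable fun p : EucN N × EucN N × ℝ => Γ p.1 p.2.1 p.2.2)
    (c₀ : ℝ) (hc₀ : 0 < c₀)
    (hK1y : ∀ (x : EucN N) (t : ℝ), 0 < t → ∫ y, Γ x y t = 1)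
    (hK1x : ∀ (y : EucN N) (t : ℝ), 0 < t → ∫ x, Γ x y t = 1)
    (hK2 : ∀ (x y : EucN N) (s t : ℝ), 0 < s → s < t →
      Γ x y t = ∫ ξ, Γ x ξ (t - s) * Γ ξ y s)
    (hK5 : ∀ (x y : EucN N) (t : ℝ), 0 < t →
      0 < Γ x y t ∧ Γ x y t ≤ c₀ * t ^ (-(N : ℝ) / (2 - α)))
    (S : ℝ → CbN N → CbN N)
    (hS0 : ∀ φ, S 0 φ = φ)
    (hSΓ : ∀ (φ : CbN N) (t : ℝ), 0 < t → ∀ x, S t φ x = ∫ y, Γ x y t * φ y)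
    (hK4 : ∀ φ : CbN N, ContinuousOn (fun t => S t φ) (Ici (0 : ℝ)))
    -- L¹–L^∞ smoothing estimate (Lemma 2.2):
    (c₁ : ℝ) (hc₁ : 0 < c₁)
    (hSmooth : ∀ φ : CbN N, Integrable (fun x => φ x) → ∀ t > (0 : ℝ),
      ‖S t φ‖ ≤ c₁ * t ^ (-(N : ℝ) / (2 - α)) * ∫ x, |φ x|)
    -- kernel lower bound (Lemma 2.3):
    (CαN : ℝ) (hCαN : 0 < CαN)
    (hLower : ∀ φ : CbN N, (∀ x, 0 ≤ φ x) → ∀ t > (0 : ℝ), ∀ x : EucN N,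
      ‖x‖ ≤ t ^ ((1 : ℝ) / (2 - α)) →
      CαN⁻¹ * t ^ (-(N : ℝ) / (2 - α)) *
        (∫ y in closedBall (0 : EucN N) (t ^ ((1 : ℝ) / (2 - α))), φ y)
        ≤ S t φ x)
    (u₀ : CbN N) (hu₀nn : ∀ x, 0 ≤ u₀ x) (hu₀ne : u₀ ≠ 0)
    (hu₀int : Integrable (fun x => u₀ x)) :
    ∃ c > (0 : ℝ), ∃ C > (0 : ℝ), ∃ t₀ > (0 : ℝ), ∀ t ≥ t₀,
      c * t ^ (-(N : ℝ) / (2 - α)) ≤ ‖S t u₀‖ ∧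
      ‖S t u₀‖ ≤ C * t ^ (-(N : ℝ) / (2 - α)) := by
  have h2α : (0:ℝ) < 2 - α := by linarith
  obtain ⟨x₀, hx₀⟩ := DFunLike.ne_iff.mp hu₀ne
  have hx₀pos : 0 < u₀ x₀ := lt_of_le_of_ne (hu₀nn x₀) (Ne.symm hx₀)
  have hsupp : IsOpen (Function.support (u₀ : EucN N → ℝ)) :=
    u₀.continuous.isOpen_support
  have hx₀mem : x₀ ∈ Function.support (u₀ : EucN N → ℝ) := by
    simpa [Function.mem_support] using hx₀
  obtain ⟨ε, hε, hball⟩ := Metric.isOpen_iff.mp hsupp x₀ hx₀mem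
  set R₀ : ℝ := ‖x₀‖ + ε with hR₀
  have hR₀pos : 0 < R₀ := by positivity
  have hsub : ball x₀ ε ⊆ closedBall (0:EucN N) R₀ := by
    intro y hy
    rw [mem_ball, dist_eq_norm] at hy
    rw [mem_closedBall, dist_zero_right]
    calc ‖y‖ = ‖y - x₀ + x₀‖ := by rw [sub_add_cancel]
    _ ≤ ‖y - x₀‖ + ‖x₀‖ := norm_add_le _ _
    _ ≤ ε + ‖x₀‖ := by linarith
    _ = R₀ := by rw [hR₀]; ring
  set m : ℝ := ∫ y in closedBall (0:EucN N) R₀, u₀ y with hm_def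
  have hm : 0 < m := by
    rw [hm_def, MeasureTheory.setIntegral_pos_iff_support_of_nonneg_ae
      (Filter.Eventually.of_forall fun x => hu₀nn x) hu₀int.integrableOn]
    refine lt_of_lt_of_le (measure_ball_pos volume x₀ hε) (measure_mono ?_)
    intro y hy
    exact ⟨hball hy, hsub hy⟩
  set I : ℝ := ∫ x, |u₀ x| with hI_def
  have hIeq : I = ∫ x, u₀ x := by
    rw [hI_def]
    exact integral_congr_ae (Filter.Eventually.of_forall fun x => abs_of_nonneg (hu₀nn x))
  have hmI : m ≤ I := by
    rw [hIeq, hm_def]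
    exact setIntegral_le_integral hu₀int (Filter.Eventually.of_forall fun x => hu₀nn x)
  refine ⟨CαN⁻¹ * m, mul_pos (inv_pos.mpr hCαN) hm, c₁ * I, mul_pos hc₁ (lt_of_lt_of_le hm hmI), max 1 (R₀ ^ (2 - α)),
    lt_of_lt_of_le one_pos (le_max_left _ _), fun t ht => ?_⟩
  have ht1 : (1:ℝ) ≤ t := le_trans (le_max_left _ _) ht
  have htpos : (0:ℝ) < t := lt_of_lt_of_le one_pos ht1
  have htR : R₀ ≤ t ^ ((1:ℝ) / (2 - α)) := by
    have h1 : R₀ ^ (2 - α) ≤ t := le_trans (le_max_right _ _) ht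
    have h2 := Real.rpow_le_rpow (by positivity) h1 (by positivity : (0:ℝ) ≤ 1 / (2 - α))
    rwa [← Real.rpow_mul hR₀pos.le, mul_one_div, div_self h2α.ne', Real.rpow_one] at h2
  have hballmono : m ≤ ∫ y in closedBall (0:EucN N) (t ^ ((1:ℝ) / (2 - α))), u₀ y := by
    rw [hm_def]
    refine setIntegral_mono_set hu₀int.integrableOn
      (Filter.Eventually.of_forall fun x => hu₀nn x) ?_
    exact HasSubset.Subset.eventuallyLE (closedBall_subset_closedBall htR)
  have hlow := hLower u₀ hu₀nn t htpos 0 (by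
    simp only [norm_zero]
    positivity)
  have htp : (0:ℝ) < t ^ (-(N : ℝ) / (2 - α)) := Real.rpow_pos_of_pos htpos _
  constructor
  · calc CαN⁻¹ * m * t ^ (-(N : ℝ) / (2 - α))
        = CαN⁻¹ * t ^ (-(N : ℝ) / (2 - α)) * m := by ring
    _ ≤ CαN⁻¹ * t ^ (-(N : ℝ) / (2 - α)) *
        ∫ y in closedBall (0:EucN N) (t ^ ((1:ℝ) / (2 - α))), u₀ y := by
        apply mul_le_mul_of_nonneg_left hballmono
        positivity
    _ ≤ S t u₀ 0 := hlow
    _ ≤ |S t u₀ 0| := le_abs_self _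
    _ ≤ ‖S t u₀‖ := (S t u₀).norm_coe_le_norm 0
  · calc ‖S t u₀‖ ≤ c₁ * t ^ (-(N : ℝ) / (2 - α)) * I := hSmooth u₀ hu₀int t htpos
    _ = c₁ * I * t ^ (-(N : ℝ) / (2 - α)) := by ring
end
end

section
/- (Proposition 2.5(ii).) Let ρ > 0 and let ψ ∈ I_ρ. Then there exist a constant C₁ > 0 and t₀ > 0 such that ‖S(t)ψ‖_∞ ≥ C₁ t^{−ρ/(2−α)} for all t ≥ t₀. -/
/-!
By the kernel lower bound at `x = 0`, `S(t)ψ(0)` is at least `C⁻¹ t^{-N/(2-α)}` times the mass of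
`ψ` on the ball of radius `r = t^{1/(2-α)}`. For `r ≥ 2R` the annulus `R < |y| ≤ r` fills at least
half of that ball, and there `ψ ≥ c r^{-ρ}`; so this mass is `≳ r^{N-ρ}`, and
`t^{-N/(2-α)} r^{N-ρ} = t^{-ρ/(2-α)}`.
-/

open MeasureTheory Real Set Metric Filter

noncomputable section

open Module

section AddHaar

variable {E : Type*} [NormedAddCommGroup E] [NormedSpace ℝ E] [FiniteDimensional ℝ E]
  [MeasurableSpace E] [BorelSpace E] (μ : Measure E) [μ.IsAddHaarMeasure]

theorem half_measureReal_closedBall_le_measureReal_annulus (hE : 0 < finrank ℝ E)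
    {R r : ℝ} (hR : 0 ≤ R) (hRr : 2 * R ≤ r) :
    r ^ finrank ℝ E / 2 * μ.real (ball 0 1) ≤ μ.real (closedBall (0 : E) r \ closedBall 0 R) := by
  have hRr' : R ≤ r := by linarith
  rw [measureReal_sdiff (closedBall_subset_closedBall hRr') measurableSet_closedBall
      measure_closedBall_lt_top.ne,
    Measure.addHaar_real_closedBall μ 0 (hR.trans hRr'), Measure.addHaar_real_closedBall μ 0 hR]
  have hpow : R ^ finrank ℝ E ≤ r ^ finrank ℝ E / 2 :=
    calc R ^ finrank ℝ E ≤ (r / 2) ^ finrank ℝ E := pow_le_pow_left₀ hR (by linarith) _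
      _ = r ^ finrank ℝ E / 2 ^ finrank ℝ E := div_pow r 2 _
      _ ≤ r ^ finrank ℝ E / 2 :=
        div_le_div_of_nonneg_left (pow_nonneg (hR.trans hRr') _) two_pos
          (le_self_pow₀ one_le_two hE.ne')
  nlinarith [measureReal_nonneg (μ := μ) (s := ball (0 : E) 1)]

theorem setIntegral_closedBall_ge_of_le_rpow_mul (hE : 0 < finrank ℝ E)
    {ψ : E → ℝ} (hψ : Continuous ψ) (hψnn : ∀ x, 0 ≤ ψ x) {c ρ R r : ℝ} (hc : 0 ≤ c)
    (hρ : 0 ≤ ρ) (hR : 0 < R) (hRr : 2 * R ≤ r) (hψR : ∀ x, R ≤ ‖x‖ → c ≤ ‖x‖ ^ ρ * ψ x) :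
    μ.real (ball 0 1) * c / 2 * r ^ ((finrank ℝ E : ℝ) - ρ) ≤ ∫ y in closedBall 0 r, ψ y ∂μ := by
  have hr : 0 < r := by linarith
  set A := closedBall (0 : E) r \ closedBall 0 R
  have hψA : ∀ x ∈ A, c * r ^ (-ρ) ≤ ψ x := by
    rintro x ⟨hxr, hxR⟩
    rw [mem_closedBall_zero_iff] at hxr
    rw [mem_closedBall_zero_iff, not_le] at hxR
    rw [rpow_neg hr.le, ← div_eq_mul_inv, div_le_iff₀ (rpow_pos_of_pos hr ρ)]
    calc c ≤ ‖x‖ ^ ρ * ψ x := hψR x hxR.le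
      _ ≤ r ^ ρ * ψ x := by gcongr; exact hψnn x
      _ = ψ x * r ^ ρ := mul_comm _ _
  have hint : IntegrableOn ψ (closedBall 0 r) μ :=
    hψ.continuousOn.integrableOn_compact (isCompact_closedBall 0 r)
  have hrpow : r ^ ((finrank ℝ E : ℝ) - ρ) = r ^ finrank ℝ E * r ^ (-ρ) := by
    rw [sub_eq_add_neg, rpow_add hr, rpow_natCast]
  calc μ.real (ball 0 1) * c / 2 * r ^ ((finrank ℝ E : ℝ) - ρ)
      = c * r ^ (-ρ) * (r ^ finrank ℝ E / 2 * μ.real (ball 0 1)) := by rw [hrpow]; ring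
    _ ≤ c * r ^ (-ρ) * μ.real A := by
      gcongr
      exact half_measureReal_closedBall_le_measureReal_annulus μ hE hR.le hRr
    _ ≤ ∫ y in A, ψ y ∂μ :=
      setIntegral_ge_of_const_le_real (measurableSet_closedBall.diff measurableSet_closedBall)
        (measure_ne_top_of_subset sdiff_subset measure_closedBall_lt_top.ne) hψA
        (hint.mono_set sdiff_subset)
    _ ≤ ∫ y in closedBall 0 r, ψ y ∂μ :=
      setIntegral_mono_set hint (.of_forall hψnn) sdiff_subset.eventuallyLE

end AddHaar

theorem rpow_neg_div_mul_rpow_one_div_rpow_sub {t : ℝ} (ht : 0 < t) (κ a b : ℝ) :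
    t ^ (-a / κ) * (t ^ (1 / κ)) ^ (a - b) = t ^ (-b / κ) := by
  rw [← rpow_mul ht.le, ← rpow_add ht]
  ring_nf

theorem semigroup_lower_decay_Irho_general
    (N : ℕ) (hN : 1 ≤ N) (α : ℝ) (hα1 : α < 1)
    (S : ℝ → CbN N → CbN N)
    -- kernel lower bound (Lemma 2.3):
    (CαN : ℝ) (hCαN : 0 < CαN)
    (hLower : ∀ φ : CbN N, (∀ x, 0 ≤ φ x) → ∀ t > (0 : ℝ), ∀ x : EucN N,
      ‖x‖ ≤ t ^ ((1 : ℝ) / (2 - α)) →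
      CαN⁻¹ * t ^ (-(N : ℝ) / (2 - α)) *
        (∫ y in closedBall (0 : EucN N) (t ^ ((1 : ℝ) / (2 - α))), φ y)
        ≤ S t φ x)
    (ρ : ℝ) (hρ : 0 < ρ)
    -- `ψ ∈ I_ρ`: nonnegative with `liminf_{|x|→∞} |x|^ρ ψ(x) > 0`
    (ψ : CbN N) (hψnn : ∀ x, 0 ≤ ψ x)
    (hψlower : ∃ c > (0 : ℝ), ∃ R : ℝ, ∀ x : EucN N, R ≤ ‖x‖ →
      c ≤ ‖x‖ ^ ρ * ψ x) :
    ∃ C₁ > (0 : ℝ), ∃ t₀ > (0 : ℝ), ∀ t ≥ t₀,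
      C₁ * t ^ (-ρ / (2 - α)) ≤ ‖S t ψ‖ := by
  obtain ⟨c, hc, R, hR⟩ := hψlower
  have hκ : 0 < 2 - α := by linarith
  set R₁ := max R 1
  have hR₁ : 0 < R₁ := lt_max_of_lt_right one_pos
  set v := volume.real (ball (0 : EucN N) 1)
  have hv : 0 < v := ENNReal.toReal_pos (measure_ball_pos volume 0 one_pos).ne'
    measure_ball_lt_top.ne
  refine ⟨CαN⁻¹ * (v * c / 2), by positivity, (2 * R₁) ^ (2 - α), by positivity, fun t ht => ?_⟩
  have ht0 : 0 < t := lt_of_lt_of_le (by positivity) ht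
  have hr : 2 * R₁ ≤ t ^ (1 / (2 - α)) := by
    rwa [one_div, le_rpow_inv_iff_of_pos (by positivity) ht0.le hκ]
  have hmass := setIntegral_closedBall_ge_of_le_rpow_mul volume
    (by rwa [finrank_euclideanSpace_fin]) ψ.continuous hψnn hc.le hρ.le hR₁ hr
    fun x hx => hR x ((le_max_left R 1).trans hx)
  rw [finrank_euclideanSpace_fin] at hmass
  calc CαN⁻¹ * (v * c / 2) * t ^ (-ρ / (2 - α))
      = CαN⁻¹ * t ^ (-(N : ℝ) / (2 - α)) *
          (v * c / 2 * (t ^ (1 / (2 - α))) ^ ((N : ℝ) - ρ)) := by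
        rw [← rpow_neg_div_mul_rpow_one_div_rpow_sub ht0 (2 - α) N ρ]; ring
    _ ≤ CαN⁻¹ * t ^ (-(N : ℝ) / (2 - α)) *
        ∫ y in closedBall (0 : EucN N) (t ^ ((1 : ℝ) / (2 - α))), ψ y := by gcongr
    _ ≤ S t ψ 0 := hLower ψ hψnn t ht0 0 (by rw [norm_zero]; positivity)
    _ ≤ ‖S t ψ‖ := (le_abs_self _).trans ((S t ψ).norm_coe_le_norm 0)

/-- Proposition 2.5(ii): for `ψ ∈ I_ρ` one has
`‖S(t)ψ‖_∞ ≥ C₁ t^{-ρ/(2-α)}` for `t` large. -/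
theorem semigroup_lower_decay_Irho
    (N : ℕ) (hN : 1 ≤ N) (α : ℝ) (hα0 : 0 ≤ α) (hα1 : α < 1)
    (Γ : EucN N → EucN N → ℝ → ℝ)
    (hΓmeas : Measurable fun p : EucN N × EucN N × ℝ => Γ p.1 p.2.1 p.2.2)
    (c₀ : ℝ) (hc₀ : 0 < c₀)
    (hK1y : ∀ (x : EucN N) (t : ℝ), 0 < t → ∫ y, Γ x y t = 1)
    (hK1x : ∀ (y : EucN N) (t : ℝ), 0 < t → ∫ x, Γ x y t = 1)
    (hK2 : ∀ (x y : EucN N) (s t : ℝ), 0 < s → s < t →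
      Γ x y t = ∫ ξ, Γ x ξ (t - s) * Γ ξ y s)
    (hK5 : ∀ (x y : EucN N) (t : ℝ), 0 < t →
      0 < Γ x y t ∧ Γ x y t ≤ c₀ * t ^ (-(N : ℝ) / (2 - α)))
    (S : ℝ → CbN N → CbN N)
    (hS0 : ∀ φ, S 0 φ = φ)
    (hSΓ : ∀ (φ : CbN N) (t : ℝ), 0 < t → ∀ x, S t φ x = ∫ y, Γ x y t * φ y)
    (hK4 : ∀ φ : CbN N, ContinuousOn (fun t => S t φ) (Ici (0 : ℝ)))
    -- kernel lower bound (Lemma 2.3):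
    (CαN : ℝ) (hCαN : 0 < CαN)
    (hLower : ∀ φ : CbN N, (∀ x, 0 ≤ φ x) → ∀ t > (0 : ℝ), ∀ x : EucN N,
      ‖x‖ ≤ t ^ ((1 : ℝ) / (2 - α)) →
      CαN⁻¹ * t ^ (-(N : ℝ) / (2 - α)) *
        (∫ y in closedBall (0 : EucN N) (t ^ ((1 : ℝ) / (2 - α))), φ y)
        ≤ S t φ x)
    (ρ : ℝ) (hρ : 0 < ρ)
    -- `ψ ∈ I_ρ`: nonnegative with `liminf_{|x|→∞} |x|^ρ ψ(x) > 0`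
    (ψ : CbN N) (hψnn : ∀ x, 0 ≤ ψ x)
    (hψlower : ∃ c > (0 : ℝ), ∃ R : ℝ, ∀ x : EucN N, R ≤ ‖x‖ →
      c ≤ ‖x‖ ^ ρ * ψ x) :
    ∃ C₁ > (0 : ℝ), ∃ t₀ > (0 : ℝ), ∀ t ≥ t₀,
      C₁ * t ^ (-ρ / (2 - α)) ≤ ‖S t ψ‖ :=
  semigroup_lower_decay_Irho_general N hN α hα1 S CαN hCαN hLower ρ hρ ψ hψnn hψlower
end
end
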